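/- arXiv:1810.12438 — 4 statements merged into one kernel-verified Lean document; each statement's English description precedes it below -/
import Mathlib

section
/- Let X be a second countable Baire topological vector space and Γ a set of continuous linear operators on X. Then the set HC(Γ) of hypercyclic vectors for Γ is dense in X if and only if Γ is topologically transitive. In particular, every topologically transitive set of operators is hypercyclic. -/
/-! For a family of operators, the universal points are the hypercyclic vectors `HC(Γ)`. A point
`x` fails to be universal exactly when its orbit misses some basic open set `o`, so the universal
points are the intersection, over a countable basis, of the open sets `⋃ T, T⁻¹(o)`. Transitivity
says precisely that each of these is dense, and the Baire property makes their intersection dense.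
Conversely, if universal points are dense, one of them lies in `U` and its orbit meets `V`. -/

open Set TopologicalSpace

section Universality

variable {ι X Y : Type*} [TopologicalSpace Y]

def universalPoints (f : ι → X → Y) : Set X :=
  {x | Dense (range fun i => f i x)}

lemma universalPoints_eq_biInter {B : Set (Set Y)} (hB : IsTopologicalBasis B)
    (f : ι → X → Y) :
    universalPoints f = ⋂ o ∈ {o ∈ B | o.Nonempty}, ⋃ i, f i ⁻¹' o := by
  ext x
  simp only [universalPoints, mem_ofPred_eq, hB.dense_iff, mem_iInter, mem_iUnion, mem_preimage,
    and_imp, Set.Nonempty, mem_inter_iff, mem_range]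
  refine forall₂_congr fun o _ => ⟨fun h hne => ?_, fun h hne => ?_⟩
  · obtain ⟨_, ho, i, rfl⟩ := h hne
    exact ⟨i, ho⟩
  · obtain ⟨i, hi⟩ := h hne
    exact ⟨_, hi, i, rfl⟩

variable [TopologicalSpace X]

def IsTopologicallyTransitive (f : ι → X → Y) : Prop :=
  ∀ U : Set X, ∀ V : Set Y, IsOpen U → IsOpen V → U.Nonempty → V.Nonempty →
    ∃ i, (f i '' U ∩ V).Nonempty

lemma IsTopologicallyTransitive.dense_iUnion_preimage {f : ι → X → Y}
    (hf : IsTopologicallyTransitive f) {o : Set Y} (ho : IsOpen o) (hne : o.Nonempty) :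
    Dense (⋃ i, f i ⁻¹' o) := by
  refine dense_iff_inter_open.2 fun U hU hUne => ?_
  obtain ⟨i, -, ⟨u, hu, rfl⟩, hfu⟩ := hf U o hU ho hUne hne
  exact ⟨u, hu, mem_iUnion.2 ⟨i, hfu⟩⟩

lemma IsTopologicallyTransitive.dense_universalPoints [BaireSpace X] [SecondCountableTopology Y]
    {f : ι → X → Y} (hcont : ∀ i, Continuous (f i)) (hf : IsTopologicallyTransitive f) :
    Dense (universalPoints f) := by
  obtain ⟨B, hBc, -, hB⟩ := exists_countable_basis Y
  rw [universalPoints_eq_biInter hB]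
  exact dense_biInter_of_isOpen
    (fun o ho => isOpen_iUnion fun i => (hB.isOpen ho.1).preimage (hcont i))
    (hBc.mono (sep_subset _ _)) (fun o ho => hf.dense_iUnion_preimage (hB.isOpen ho.1) ho.2)

lemma Dense.isTopologicallyTransitive {f : ι → X → Y} (h : Dense (universalPoints f)) :
    IsTopologicallyTransitive f := by
  intro U V hU hV hUne hVne
  obtain ⟨x, hxU, hx⟩ := h.inter_open_nonempty U hU hUne
  obtain ⟨_, hyV, i, rfl⟩ := hx.inter_open_nonempty V hV hVne
  exact ⟨i, f i x, mem_image_of_mem _ hxU, hyV⟩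

lemma dense_universalPoints_iff [BaireSpace X] [SecondCountableTopology Y] {f : ι → X → Y}
    (hcont : ∀ i, Continuous (f i)) :
    Dense (universalPoints f) ↔ IsTopologicallyTransitive f :=
  ⟨Dense.isTopologicallyTransitive, fun hf => hf.dense_universalPoints hcont⟩

end Universality

theorem stmt_8_general {X : Type*} [AddCommGroup X] [Module ℂ X] [TopologicalSpace X]
    [SecondCountableTopology X] [BaireSpace X]
    (Γ : Set (X →L[ℂ] X)) :
    (Dense {x : X | Dense ((fun T : X →L[ℂ] X => T x) '' Γ)} ↔
      (∀ U V : Set X, IsOpen U → IsOpen V → U.Nonempty → V.Nonempty →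
        ∃ T ∈ Γ, (T '' U ∩ V).Nonempty)) ∧
    ((∀ U V : Set X, IsOpen U → IsOpen V → U.Nonempty → V.Nonempty →
        ∃ T ∈ Γ, (T '' U ∩ V).Nonempty) →
      ∃ x : X, Dense ((fun T : X →L[ℂ] X => T x) '' Γ)) := by
  set f : Γ → X → X := fun T => T.1
  have hcont : ∀ T, Continuous (f T) := fun T => T.1.continuous
  have hset : {x : X | Dense ((fun T : X →L[ℂ] X => T x) '' Γ)} = universalPoints f := by
    simp only [universalPoints, image_eq_range, f]
  have htrans : (∀ U V : Set X, IsOpen U → IsOpen V → U.Nonempty → V.Nonempty →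
      ∃ T ∈ Γ, (T '' U ∩ V).Nonempty) ↔ IsTopologicallyTransitive f := by
    simp only [IsTopologicallyTransitive, Subtype.exists, exists_prop, f]
  have : Nonempty X := ⟨0⟩
  rw [htrans, ← dense_universalPoints_iff hcont, ← hset]
  exact ⟨Iff.rfl, Dense.nonempty⟩

theorem stmt_8 {X : Type*} [AddCommGroup X] [Module ℂ X] [TopologicalSpace X]
    [IsTopologicalAddGroup X] [ContinuousSMul ℂ X]
    [SecondCountableTopology X] [BaireSpace X]
    (Γ : Set (X →L[ℂ] X)) :
    (Dense {x : X | Dense ((fun T : X →L[ℂ] X => T x) '' Γ)} ↔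
      (∀ U V : Set X, IsOpen U → IsOpen V → U.Nonempty → V.Nonempty →
        ∃ T ∈ Γ, (T '' U ∩ V).Nonempty)) ∧
    ((∀ U V : Set X, IsOpen U → IsOpen V → U.Nonempty → V.Nonempty →
        ∃ T ∈ Γ, (T '' U ∩ V).Nonempty) →
      ∃ x : X, Dense ((fun T : X →L[ℂ] X => T x) '' Γ)) :=
  stmt_8_general Γ
end

section
/- Let X be a second countable Baire complex topological vector space and Γ ⊆ B(X). Suppose there exist dense subsets X₀, Y₀ of X, a sequence (T_k) in Γ, and maps S_k : Y₀ → X such that T_k x → 0 for all x ∈ X₀, S_k y → 0 for all y ∈ Y₀, and T_k S_k y → y for all y ∈ Y₀. Then Γ is topologically transitive (and hence hypercyclic). -/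
/-!
Given nonempty open `U ∋ x` and `V ∋ y` with `x ∈ X₀`, `y ∈ Y₀`, the perturbations
`x + S_k y → x` are mapped by `T_k` to `T_k x + T_k S_k y → 0 + y`, so eventually `T_k` sends a
point of `U` into `V`. Hypercyclicity then follows by Birkhoff's argument: for every open `V` from
a countable basis, the points sent into `V` by some `T ∈ Γ` form a dense open set, and a point in
the intersection of these countably many sets has a dense orbit by the Baire property.
-/

open Filter Topology Set

def IsTopologicallyTransitiveFamily {F X : Type*} [FunLike F X X] [TopologicalSpace X]
    (Γ : Set F) : Prop :=
  ∀ U V : Set X, IsOpen U → IsOpen V → U.Nonempty → V.Nonempty →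
    ∃ T ∈ Γ, (T '' U ∩ V).Nonempty

section Criterion

variable {F X : Type*} [AddZeroClass X] [TopologicalSpace X] [ContinuousAdd X]
  [FunLike F X X] [AddHomClass F X X]

theorem eventually_image_inter_nonempty_of_hypercyclicityCriterion
    {X₀ Y₀ : Set X} (hX₀ : Dense X₀) (hY₀ : Dense Y₀) {T : ℕ → F} {S : ℕ → X → X}
    (hT : ∀ x ∈ X₀, Tendsto (fun k => T k x) atTop (𝓝 0))
    (hS : ∀ y ∈ Y₀, Tendsto (fun k => S k y) atTop (𝓝 0))
    (hTS : ∀ y ∈ Y₀, Tendsto (fun k => T k (S k y)) atTop (𝓝 y))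
    {U V : Set X} (hU : IsOpen U) (hV : IsOpen V) (hUne : U.Nonempty) (hVne : V.Nonempty) :
    ∀ᶠ k in atTop, (T k '' U ∩ V).Nonempty := by
  obtain ⟨x, hxX₀, hxU⟩ := hX₀.exists_mem_open hU hUne
  obtain ⟨y, hyY₀, hyV⟩ := hY₀.exists_mem_open hV hVne
  have hperturb : Tendsto (fun k => x + S k y) atTop (𝓝 x) := by
    simpa using tendsto_const_nhds.add (hS y hyY₀)
  have himage : Tendsto (fun k => T k (x + S k y)) atTop (𝓝 y) := by
    simpa [map_add] using (hT x hxX₀).add (hTS y hyY₀)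
  filter_upwards [hperturb (hU.mem_nhds hxU), himage (hV.mem_nhds hyV)] with k hkU hkV
  exact ⟨_, mem_image_of_mem _ hkU, hkV⟩

theorem isTopologicallyTransitiveFamily_of_hypercyclicityCriterion
    {Γ : Set F} {X₀ Y₀ : Set X} (hX₀ : Dense X₀) (hY₀ : Dense Y₀) {T : ℕ → F}
    (hTΓ : ∀ k, T k ∈ Γ) {S : ℕ → X → X}
    (hT : ∀ x ∈ X₀, Tendsto (fun k => T k x) atTop (𝓝 0))
    (hS : ∀ y ∈ Y₀, Tendsto (fun k => S k y) atTop (𝓝 0))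
    (hTS : ∀ y ∈ Y₀, Tendsto (fun k => T k (S k y)) atTop (𝓝 y)) :
    IsTopologicallyTransitiveFamily Γ := fun _ _ hU hV hUne hVne =>
  let ⟨k, hk⟩ := (eventually_image_inter_nonempty_of_hypercyclicityCriterion
    hX₀ hY₀ hT hS hTS hU hV hUne hVne).exists
  ⟨T k, hTΓ k, hk⟩

end Criterion

section Birkhoff

variable {F X : Type*} [TopologicalSpace X] [FunLike F X X] {Γ : Set F}

theorem IsTopologicallyTransitiveFamily.dense_iUnion_preimage
    (hΓ : IsTopologicallyTransitiveFamily Γ) {V : Set X} (hV : IsOpen V) (hVne : V.Nonempty) :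
    Dense (⋃ T ∈ Γ, (T : X → X) ⁻¹' V) := by
  refine dense_iff_inter_open.2 fun U hU hUne => ?_
  obtain ⟨T, hTΓ, _, ⟨u, huU, rfl⟩, hTuV⟩ := hΓ U V hU hV hUne hVne
  exact ⟨u, huU, mem_biUnion hTΓ hTuV⟩

theorem IsTopologicallyTransitiveFamily.exists_dense_orbit [ContinuousMapClass F X X]
    [SecondCountableTopology X] [BaireSpace X] [Nonempty X]
    (hΓ : IsTopologicallyTransitiveFamily Γ) :
    ∃ x : X, Dense ((fun T : F => T x) '' Γ) := by
  obtain ⟨b, hbc, hb_empty, hb⟩ := TopologicalSpace.exists_countable_basis X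
  have hbne : ∀ V ∈ b, V.Nonempty := fun V hV =>
    nonempty_iff_ne_empty.2 (ne_of_mem_of_not_mem hV hb_empty)
  have hdense : Dense (⋂ V ∈ b, ⋃ T ∈ Γ, (T : X → X) ⁻¹' V) :=
    dense_biInter_of_isOpen
      (fun V hV => isOpen_biUnion fun T _ => (hb.isOpen hV).preimage (map_continuous T)) hbc
      (fun V hV => hΓ.dense_iUnion_preimage (hb.isOpen hV) (hbne V hV))
  obtain ⟨x, hx⟩ := hdense.nonempty
  refine ⟨x, hb.dense_iff.2 fun V hV _ => ?_⟩
  obtain ⟨T, hTΓ, hTxV⟩ := mem_iUnion₂.1 (mem_iInter₂.1 hx V hV)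
  exact ⟨T x, hTxV, T, hTΓ, rfl⟩

end Birkhoff

theorem stmt_10_general {X : Type*} [AddCommGroup X] [Module ℂ X] [TopologicalSpace X]
    [IsTopologicalAddGroup X]
    [SecondCountableTopology X] [BaireSpace X]
    (Γ : Set (X →L[ℂ] X)) (X₀ Y₀ : Set X) (hX₀ : Dense X₀) (hY₀ : Dense Y₀)
    (Tk : ℕ → X →L[ℂ] X) (hTk : ∀ k, Tk k ∈ Γ)
    (Sk : ℕ → X → X)
    (h1 : ∀ x ∈ X₀, Tendsto (fun k => Tk k x) atTop (𝓝 0))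
    (h2 : ∀ y ∈ Y₀, Tendsto (fun k => Sk k y) atTop (𝓝 0))
    (h3 : ∀ y ∈ Y₀, Tendsto (fun k => Tk k (Sk k y)) atTop (𝓝 y)) :
    (∀ U V : Set X, IsOpen U → IsOpen V → U.Nonempty → V.Nonempty →
      ∃ T ∈ Γ, (T '' U ∩ V).Nonempty) ∧
    ∃ x : X, Dense ((fun T : X →L[ℂ] X => T x) '' Γ) := by
  have hΓ : IsTopologicallyTransitiveFamily Γ :=
    isTopologicallyTransitiveFamily_of_hypercyclicityCriterion hX₀ hY₀ hTk h1 h2 h3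
  exact ⟨hΓ, hΓ.exists_dense_orbit⟩

theorem stmt_10 {X : Type*} [AddCommGroup X] [Module ℂ X] [TopologicalSpace X]
    [IsTopologicalAddGroup X] [ContinuousSMul ℂ X]
    [SecondCountableTopology X] [BaireSpace X]
    (Γ : Set (X →L[ℂ] X)) (X₀ Y₀ : Set X) (hX₀ : Dense X₀) (hY₀ : Dense Y₀)
    (Tk : ℕ → X →L[ℂ] X) (hTk : ∀ k, Tk k ∈ Γ)
    (Sk : ℕ → X → X)
    (h1 : ∀ x ∈ X₀, Tendsto (fun k => Tk k x) atTop (𝓝 0))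
    (h2 : ∀ y ∈ Y₀, Tendsto (fun k => Sk k y) atTop (𝓝 0))
    (h3 : ∀ y ∈ Y₀, Tendsto (fun k => Tk k (Sk k y)) atTop (𝓝 y)) :
    (∀ U V : Set X, IsOpen U → IsOpen V → U.Nonempty → V.Nonempty →
      ∃ T ∈ Γ, (T '' U ∩ V).Nonempty) ∧
    ∃ x : X, Dense ((fun T : X →L[ℂ] X => T x) '' Γ) :=
  stmt_10_general Γ X₀ Y₀ hX₀ hY₀ Tk hTk Sk h1 h2 h3
end

section
/- Let (S(z))_{z∈ℂ} be an entire C-regularized group on a topological vector space X such that C has dense range. If the family {S(z) : z ∈ ℂ} is hypercyclic (some vector has dense orbit), then it is topologically transitive: for all nonempty open sets U, V ⊆ X there exists z ∈ ℂ with S(z)(V) ∩ U ≠ ∅. -/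
/-!
Let `x` have dense orbit and let `U`, `V` be nonempty open sets. Pick `S z₂ x ∈ V`; since `C` is
continuous with dense range, `C` maps the orbit of `x` onto a dense set, so some `C (S z₁ x)` lies
in `U`. The group law gives `S (z₁ - z₂) (S z₂ x) = S z₁ (C x) = C (S z₁ x)`, so `S (z₁ - z₂)`
carries a point of `V` into `U`.
-/

open Set

namespace RegularizedGroup

variable {G X : Type*} [AddGroup G] {S : G → X → X} {C : X → X}

def IsTopologicallyTransitive [TopologicalSpace X] (S : G → X → X) : Prop :=
  ∀ U V : Set X, IsOpen U → IsOpen V → U.Nonempty → V.Nonempty → ∃ z, (S z '' V ∩ U).Nonempty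

theorem comp_comm (hS0 : S 0 = C) (hgrp : ∀ z w, S (z + w) ∘ C = S z ∘ S w) (z : G) :
    C ∘ S z = S z ∘ C := by
  simpa [hS0] using (hgrp 0 z).symm

theorem apply_sub_apply (hS0 : S 0 = C) (hgrp : ∀ z w, S (z + w) ∘ C = S z ∘ S w)
    (z₁ z₂ : G) (x : X) : S (z₁ - z₂) (S z₂ x) = C (S z₁ x) := by
  calc S (z₁ - z₂) (S z₂ x) = S z₁ (C x) := by
        simpa using congrFun (hgrp (z₁ - z₂) z₂).symm x
    _ = C (S z₁ x) := (congrFun (comp_comm hS0 hgrp z₁) x).symm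

theorem isTopologicallyTransitive_of_dense_orbit [TopologicalSpace X]
    (hS0 : S 0 = C) (hgrp : ∀ z w, S (z + w) ∘ C = S z ∘ S w)
    (hC : Continuous C) (hCdense : DenseRange C) {x : X} (hx : Dense (range fun z => S z x)) :
    IsTopologicallyTransitive S := by
  intro U V hU hV hUne hVne
  obtain ⟨_, ⟨z₂, rfl⟩, hz₂V⟩ := hx.exists_mem_open hV hVne
  obtain ⟨_, ⟨_, ⟨z₁, rfl⟩, rfl⟩, hz₁U⟩ :=
    (hCdense.dense_image hC hx).exists_mem_open hU hUne
  exact ⟨z₁ - z₂, _, mem_image_of_mem _ hz₂V, by rwa [apply_sub_apply hS0 hgrp]⟩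

end RegularizedGroup

theorem stmt_12_general {X : Type*} [AddCommGroup X] [Module ℂ X] [TopologicalSpace X]
    (S : ℂ → X →L[ℂ] X) (C : X →L[ℂ] X)
    (hS0 : S 0 = C)
    (hgrp : ∀ z w : ℂ, (S (z + w)).comp C = (S z).comp (S w))
    (hC : DenseRange C)
    (hhyp : ∃ x : X, Dense (Set.range fun z : ℂ => S z x)) :
    ∀ U V : Set X, IsOpen U → IsOpen V → U.Nonempty → V.Nonempty →
      ∃ z : ℂ, (S z '' V ∩ U).Nonempty := by
  obtain ⟨x, hx⟩ := hhyp
  exact RegularizedGroup.isTopologicallyTransitive_of_dense_orbit (S := fun z => S z)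
    (congrArg DFunLike.coe hS0) (fun z w => congrArg DFunLike.coe (hgrp z w))
    C.continuous hC hx

theorem stmt_12 {X : Type*} [AddCommGroup X] [Module ℂ X] [TopologicalSpace X]
    [IsTopologicalAddGroup X] [ContinuousSMul ℂ X]
    (S : ℂ → X →L[ℂ] X) (C : X →L[ℂ] X)
    (hS0 : S 0 = C)
    (hgrp : ∀ z w : ℂ, (S (z + w)).comp C = (S z).comp (S w))
    (hC : DenseRange C)
    (hhyp : ∃ x : X, Dense (Set.range fun z : ℂ => S z x)) :
    ∀ U V : Set X, IsOpen U → IsOpen V → U.Nonempty → V.Nonempty →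
      ∃ z : ℂ, (S z '' V ∩ U).Nonempty :=
  stmt_12_general S C hS0 hgrp hC hhyp
end

section
/- Let X be a topological space that is not necessarily without isolated points and Γ ⊆ B(X) a hypercyclic set of operators such that for all T, S ∈ Γ with T ≠ S there exists A ∈ Γ with T = A ∘ S. Then Γ ∪ {Id} is topologically transitive. -/
/-! Pick points `S x ∈ U` and `T x ∈ V` of the dense orbit. If `T = S`, then `U` and `V` already
meet; otherwise `T = A ∘ S` for some `A ∈ Γ`, and `A` carries `S x ∈ U` to `T x ∈ V`. -/

theorem exists_mem_image_inter_nonempty_or_inter_nonempty {F X : Type*} [FunLike F X X]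
    [TopologicalSpace X] {Γ : Set F} {x : X} (hx : Dense ((fun T : F => T x) '' Γ))
    (hfac : ∀ T ∈ Γ, ∀ S ∈ Γ, T ≠ S → ∃ A ∈ Γ, ∀ y : X, T y = A (S y))
    {U V : Set X} (hU : IsOpen U) (hV : IsOpen V) (hUne : U.Nonempty) (hVne : V.Nonempty) :
    (∃ A ∈ Γ, (A '' U ∩ V).Nonempty) ∨ (U ∩ V).Nonempty := by
  obtain ⟨_, ⟨S, hS, rfl⟩, hSU⟩ := hx.exists_mem_open hU hUne
  obtain ⟨_, ⟨T, hT, rfl⟩, hTV⟩ := hx.exists_mem_open hV hVne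
  by_cases hTS : T = S
  · subst hTS
    exact Or.inr ⟨T x, hSU, hTV⟩
  · obtain ⟨A, hA, hTA⟩ := hfac T hT S hS hTS
    exact Or.inl ⟨A, hA, A (S x), ⟨S x, hSU, rfl⟩, hTA x ▸ hTV⟩

theorem stmt_17_general {X : Type*} [AddCommGroup X] [Module ℂ X] [TopologicalSpace X]
    (Γ : Set (X →L[ℂ] X))
    (hhyp : ∃ x : X, Dense ((fun T : X →L[ℂ] X => T x) '' Γ))
    (hfac : ∀ T ∈ Γ, ∀ S ∈ Γ, T ≠ S → ∃ A ∈ Γ, ∀ x : X, T x = A (S x)) :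
    ∀ U V : Set X, IsOpen U → IsOpen V → U.Nonempty → V.Nonempty →
      ∃ T ∈ Γ ∪ {ContinuousLinearMap.id ℂ X}, (T '' U ∩ V).Nonempty := by
  intro U V hU hV hUne hVne
  obtain ⟨x, hx⟩ := hhyp
  rcases exists_mem_image_inter_nonempty_or_inter_nonempty hx hfac hU hV hUne hVne with
    ⟨A, hA, hAUV⟩ | hUV
  · exact ⟨A, Or.inl hA, hAUV⟩
  · exact ⟨ContinuousLinearMap.id ℂ X, Or.inr rfl, by simpa using hUV⟩

theorem stmt_17 {X : Type*} [AddCommGroup X] [Module ℂ X] [TopologicalSpace X]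
    [IsTopologicalAddGroup X] [ContinuousSMul ℂ X]
    (Γ : Set (X →L[ℂ] X))
    (hhyp : ∃ x : X, Dense ((fun T : X →L[ℂ] X => T x) '' Γ))
    (hfac : ∀ T ∈ Γ, ∀ S ∈ Γ, T ≠ S → ∃ A ∈ Γ, ∀ x : X, T x = A (S x)) :
    ∀ U V : Set X, IsOpen U → IsOpen V → U.Nonempty → V.Nonempty →
      ∃ T ∈ Γ ∪ {ContinuousLinearMap.id ℂ X}, (T '' U ∩ V).Nonempty :=
  stmt_17_general Γ hhyp hfac
end
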